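/- Suppose every solvable permutation group of degree less than n has solvable 3-closure. Then every intransitive solvable permutation group G of degree n has solvable 3-closure. -/

import Mathlib

/-- Two subgroups of `Perm Ω` have the same orbits on `Ω^m` under the
componentwise action (`m`-equivalence). -/
def SameOrbits {Ω : Type*} (m : ℕ) (G H : Subgroup (Equiv.Perm Ω)) : Prop :=
  ∀ α β : Fin m → Ω,
    (∃ g ∈ G, ∀ i, g (α i) = β i) ↔ (∃ h ∈ H, ∀ i, h (α i) = β i)

/-- The `m`-closure of `G`: the largest subgroup of `Perm Ω` having the same
orbits as `G` on `Ω^m`. -/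
def mClosure {Ω : Type*} (m : ℕ) (G : Subgroup (Equiv.Perm Ω)) :
    Subgroup (Equiv.Perm Ω) :=
  sSup {H | SameOrbits m G H}

/-!
The orbit of a point is invariant under `G`, hence under its 3-closure, which moves every point
within its `G`-orbit. Restricting to this orbit and to its complement, both of size less than `n`
when `G` is intransitive, embeds the 3-closure of `G` into the product of the 3-closures of the two
restrictions of `G`; these are solvable by hypothesis.
-/

open Equiv

section Closure

variable {Ω : Type*}

def orbitPreserving (m : ℕ) (G : Subgroup (Perm Ω)) : Subgroup (Perm Ω) where
  carrier := {h | ∀ α : Fin m → Ω, ∃ g ∈ G, ∀ i, g (α i) = h (α i)}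
  one_mem' _ := ⟨1, G.one_mem, fun _ => rfl⟩
  mul_mem' {a b} ha hb α := by
    obtain ⟨g₂, hg₂, hb⟩ := hb α
    obtain ⟨g₁, hg₁, ha⟩ := ha (fun i => b (α i))
    exact ⟨g₁ * g₂, G.mul_mem hg₁ hg₂, fun i => by simp only [Perm.mul_apply, hb, ha]⟩
  inv_mem' {a} ha α := by
    obtain ⟨g, hg, ha⟩ := ha (fun i => a⁻¹ (α i))
    refine ⟨g⁻¹, G.inv_mem hg, fun i => ?_⟩
    rw [Perm.inv_eq_iff_eq, ha i, Perm.coe_inv, apply_symm_apply]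

theorem mClosure_eq_orbitPreserving (m : ℕ) (G : Subgroup (Perm Ω)) :
    mClosure m G = orbitPreserving m G := by
  refine le_antisymm (sSup_le fun H hH h hh α => ?_) (le_sSup fun α β => ⟨?_, ?_⟩)
  · exact (hH α (fun i => h (α i))).mpr ⟨h, hh, fun _ => rfl⟩
  · rintro ⟨g, hg, hgβ⟩
    exact ⟨g, fun _ => ⟨g, hg, fun _ => rfl⟩, hgβ⟩
  · rintro ⟨h, hh, hhβ⟩
    obtain ⟨g, hg, hgh⟩ := hh α
    exact ⟨g, hg, fun i => (hgh i).trans (hhβ i)⟩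

theorem mem_mClosure_iff {m : ℕ} {G : Subgroup (Perm Ω)} {h : Perm Ω} :
    h ∈ mClosure m G ↔ ∀ α : Fin m → Ω, ∃ g ∈ G, ∀ i, g (α i) = h (α i) := by
  rw [mClosure_eq_orbitPreserving]
  rfl

theorem le_mClosure (m : ℕ) (G : Subgroup (Perm Ω)) : G ≤ mClosure m G :=
  fun g hg => mem_mClosure_iff.mpr fun _ => ⟨g, hg, fun _ => rfl⟩

theorem exists_apply_eq_of_mem_mClosure {m : ℕ} (hm : m ≠ 0) {G : Subgroup (Perm Ω)}
    {h : Perm Ω} (hh : h ∈ mClosure m G) (z : Ω) : ∃ g ∈ G, g z = h z := by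
  obtain ⟨g, hg, hgh⟩ := mem_mClosure_iff.mp hh (fun _ => z)
  exact ⟨g, hg, hgh ⟨0, Nat.pos_of_ne_zero hm⟩⟩

end Closure

section Transport

variable {α β : Type*}

theorem permCongrHom_mem_mClosure_map (e : α ≃ β) {m : ℕ} {H : Subgroup (Perm α)}
    {h : Perm α} (hh : h ∈ mClosure m H) :
    e.permCongrHom h ∈ mClosure m (H.map e.permCongrHom.toMonoidHom) := by
  refine mem_mClosure_iff.mpr fun a => ?_
  obtain ⟨g, hg, hgh⟩ := mem_mClosure_iff.mp hh (fun i => e.symm (a i))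
  exact ⟨e.permCongrHom g, ⟨g, hg, rfl⟩, fun i => congrArg e (hgh i)⟩

theorem isSolvable_mClosure_of_map_permCongrHom (e : α ≃ β) (m : ℕ) (H : Subgroup (Perm α))
    [Group.IsSolvable (mClosure m (H.map e.permCongrHom.toMonoidHom))] :
    Group.IsSolvable (mClosure m H) :=
  Group.isSolvable_of_isSolvable_injective
    (f := (e.permCongrHom.toMonoidHom.comp (mClosure m H).subtype).codRestrict _
      fun h => permCongrHom_mem_mClosure_map e h.2)
    fun _ _ hgh => Subtype.ext (e.permCongrHom.injective (congrArg Subtype.val hgh))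

theorem isSolvable_mClosure_of_card_lt {m n : ℕ}
    (hsmall : ∀ k < n, ∀ G' : Subgroup (Perm (Fin k)),
      Group.IsSolvable G' → Group.IsSolvable (mClosure m G'))
    {Γ : Type*} [Finite Γ] (hΓ : Nat.card Γ < n) (H : Subgroup (Perm Γ))
    [Group.IsSolvable H] : Group.IsSolvable (mClosure m H) := by
  let e := Finite.equivFin Γ
  have : Group.IsSolvable (mClosure m (H.map e.permCongrHom.toMonoidHom)) :=
    hsmall _ hΓ _ (Group.isSolvable_of_surjective
      (e.permCongrHom.toMonoidHom.subgroupMap_surjective H))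
  exact isSolvable_mClosure_of_map_permCongrHom e m H

end Transport

section Restriction

variable {Ω : Type*}

def PreservesPred (S : Subgroup (Perm Ω)) (p : Ω → Prop) : Prop :=
  ∀ g ∈ S, ∀ z, p (g z) ↔ p z

theorem PreservesPred.not {S : Subgroup (Perm Ω)} {p : Ω → Prop} (hS : PreservesPred S p) :
    PreservesPred S (¬ p ·) :=
  fun g hg z => not_congr (hS g hg z)

theorem PreservesPred.mClosure {m : ℕ} (hm : m ≠ 0) {G : Subgroup (Perm Ω)} {p : Ω → Prop}
    (hG : PreservesPred G p) : PreservesPred (mClosure m G) p := by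
  intro h hh z
  obtain ⟨g, hg, hgh⟩ := exists_apply_eq_of_mem_mClosure hm hh z
  rw [← hgh]
  exact hG g hg z

theorem preservesPred_orbit (G : Subgroup (Perm Ω)) (x : Ω) :
    PreservesPred G (fun z => ∃ g ∈ G, g x = z) := fun g hg z =>
  ⟨fun ⟨g', hg', e⟩ => ⟨g⁻¹ * g', G.mul_mem (G.inv_mem hg) hg', by simp [e]⟩,
    fun ⟨g', hg', e⟩ => ⟨g * g', G.mul_mem hg hg', by simp [e]⟩⟩

def restrictPerm (S : Subgroup (Perm Ω)) (p : Ω → Prop) (hS : PreservesPred S p) :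
    S →* Perm {z // p z} where
  toFun g := (g : Perm Ω).subtypePerm (hS g g.2)
  map_one' := rfl
  map_mul' _ _ := rfl

theorem restrictPerm_mem_mClosure {m : ℕ} {G M : Subgroup (Perm Ω)} {p : Ω → Prop}
    (hG : PreservesPred G p) (hM : PreservesPred M p) {h : M}
    (hh : (h : Perm Ω) ∈ mClosure m G) :
    restrictPerm M p hM h ∈ mClosure m (restrictPerm G p hG).range := by
  refine mem_mClosure_iff.mpr fun a => ?_
  obtain ⟨g, hg, hgh⟩ := mem_mClosure_iff.mp hh (fun i => a i)
  exact ⟨restrictPerm G p hG ⟨g, hg⟩, ⟨_, rfl⟩, fun i => Subtype.ext (hgh i)⟩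

theorem injective_restrictPerm_prod {S : Subgroup (Perm Ω)} {p : Ω → Prop}
    (hS : PreservesPred S p) :
    Function.Injective ((restrictPerm S p hS).prod (restrictPerm S (¬ p ·) hS.not)) := by
  intro g₁ g₂ h
  ext z
  by_cases hz : p z
  · exact congrArg (fun π => (π.1 ⟨z, hz⟩ : Ω)) h
  · exact congrArg (fun π => (π.2 ⟨z, hz⟩ : Ω)) h

theorem isSolvable_mClosure_of_preservesPred {m : ℕ} (hm : m ≠ 0) {G : Subgroup (Perm Ω)}
    {p : Ω → Prop} (hG : PreservesPred G p)
    [Group.IsSolvable (mClosure m (restrictPerm G p hG).range)]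
    [Group.IsSolvable (mClosure m (restrictPerm G (¬ p ·) hG.not).range)] :
    Group.IsSolvable (mClosure m G) := by
  have hM := hG.mClosure hm
  let Ψ := ((restrictPerm _ p hM).codRestrict _ fun h => restrictPerm_mem_mClosure hG hM h.2).prod
    ((restrictPerm _ (¬ p ·) hM.not).codRestrict _ fun h =>
      restrictPerm_mem_mClosure hG.not hM.not h.2)
  refine Group.isSolvable_of_isSolvable_injective (f := Ψ) fun h₁ h₂ h => ?_
  exact injective_restrictPerm_prod hM
    (Prod.ext (congrArg (Subtype.val ∘ Prod.fst) h) (congrArg (Subtype.val ∘ Prod.snd) h))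

end Restriction

/-- If every solvable permutation group of degree less than `n` has solvable
3-closure, then every intransitive solvable permutation group of degree `n`
has solvable 3-closure. -/
theorem stmt17 (n : ℕ)
    (hsmall : ∀ k < n, ∀ G' : Subgroup (Equiv.Perm (Fin k)),
      IsSolvable G' → IsSolvable (mClosure 3 G'))
    {Ω : Type*} [Fintype Ω] (hΩ : Fintype.card Ω = n)
    (G : Subgroup (Equiv.Perm Ω)) (hsolv : IsSolvable G)
    (hintrans : ¬ ∀ x y : Ω, ∃ g ∈ G, g x = y) :
    IsSolvable (mClosure 3 G) := by
  have : Group.IsSolvable G := hsolv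
  have hsmall' (q : Ω → Prop) (hq : PreservesPred G q) (hcard : Nat.card {z // q z} < n) :
      Group.IsSolvable (mClosure 3 (restrictPerm G q hq).range) :=
    have := Group.isSolvable_of_surjective (restrictPerm G q hq).rangeRestrict_surjective
    isSolvable_mClosure_of_card_lt hsmall hcard _
  rw [← Nat.card_eq_fintype_card] at hΩ
  push Not at hintrans
  obtain ⟨x, y, hy⟩ := hintrans
  have hG := preservesPred_orbit G x
  have := hsmall' _ hG <| hΩ ▸ Finite.card_subtype_lt (x := y) fun ⟨g, hg, e⟩ => hy g hg e
  have := hsmall' _ hG.not <|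
    hΩ ▸ Finite.card_subtype_lt (x := x) (not_not.mpr ⟨1, G.one_mem, rfl⟩)
  exact isSolvable_mClosure_of_preservesPred three_ne_zero hG
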